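/- Let x be a collision-free solution of the first-order singular Cucker–Smale system with β > 1, and set D_ν = max_i ν_i − min_i ν_i. Then the position diameter D_x(t) = max_i x_i(t) − min_i x_i(t) satisfies D_x(t) ≥ C_L for all t ≥ 0, where C_L = min{ 1, D_x(0), (1 + N·D_ν·(β−1)/(2κ))^{−1/(β−1)} }. -/

import Mathlib

/-!
Barrier argument. If `D_x(t₀) < C_L`, pick `D_x(t₀) < c < C_L` and let `s` be the last time in
`[0, t₀]` with `D_x(s) ≥ c`, so `D_x(s) = c` and `D_x < c` just after `s`. At time `s` the extreme
agents `i` (rightmost) and `j` (leftmost) are at distance `c < Φ⁻¹(-N D_ν / (2κ))`. Since `Φ` is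
increasing on `(0, ∞)` and agents never collide, each of the other `N - 1` agents repels `i` and
`j` by at least `-Φ(c) > N D_ν / (2κ)`, which dominates `ν_i - ν_j ≥ -D_ν`. Hence
`(x_i - x_j)'(s) > 0`, and `D_x ≥ x_i - x_j > c` right after `s`, a contradiction.
-/

open Real Filter Set Topology

/-- The potential function `Φ(x) = sign(x)·(β−1)⁻¹(1 − |x|^{1−β})` (with `Φ(0)=0`). -/
noncomputable def PhiCS (β y : ℝ) : ℝ := Real.sign y * (1 - |y| ^ (1 - β)) / (β - 1)

/-- A collision-free solution on `[0,∞)` of the first-order singular Cucker–Smale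
system with short-range interaction:
`x_i'(t) = ν_i + (κ/N) Σ_{k≠i} Φ(x_k(t) − x_i(t))`, with `Σ_i x_i(0) = 0` and no
collisions for all `t ≥ 0`. -/
def IsCFSol (N : ℕ) (β κ : ℝ) (ν : Fin N → ℝ) (x : ℝ → Fin N → ℝ) : Prop :=
  (∀ t ≥ (0:ℝ), ∀ i j : Fin N, i ≠ j → x t i ≠ x t j) ∧
  (∑ i, x 0 i = 0) ∧
  ∀ i, ∀ t ≥ (0:ℝ), HasDerivWithinAt (fun s => x s i)
    (ν i + (κ / (N:ℝ)) * ∑ k ∈ Finset.univ.erase i, PhiCS β (x t k - x t i)) (Set.Ici 0) t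

/-- The diameter of a configuration `y : Fin N → ℝ`. -/
noncomputable def diam {N : ℕ} (y : Fin N → ℝ) : ℝ := ⨆ i, ⨆ j, (y i - y j)

section Diam

variable {N : ℕ}

lemma le_diam (y : Fin N → ℝ) (i j : Fin N) : y i - y j ≤ diam y :=
  (le_ciSup (Set.finite_range fun j => y i - y j).bddAbove j).trans <|
    le_ciSup (Set.finite_range fun i => ⨆ j, (y i - y j)).bddAbove i

variable [NeZero N]

lemma diam_nonneg (y : Fin N → ℝ) : 0 ≤ diam y := by
  simpa using le_diam y 0 0

lemma diam_le {y : Fin N → ℝ} {c : ℝ} (h : ∀ i j, y i - y j ≤ c) : diam y ≤ c :=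
  ciSup_le fun i => ciSup_le fun j => h i j

lemma diam_eq_sub {y : Fin N → ℝ} {i j : Fin N} (hi : ∀ k, y k ≤ y i) (hj : ∀ k, y j ≤ y k) :
    diam y = y i - y j :=
  le_antisymm (diam_le fun k l => by linarith [hi k, hj l]) (le_diam y i j)

lemma diam_eq_sup' (y : Fin N → ℝ) :
    diam y = Finset.univ.sup' Finset.univ_nonempty
      fun i => Finset.univ.sup' Finset.univ_nonempty fun j => y i - y j := by
  simp only [Finset.sup'_univ_eq_ciSup, diam]

lemma continuousOn_diam {x : ℝ → Fin N → ℝ} {s : Set ℝ}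
    (hx : ∀ i, ContinuousOn (fun t => x t i) s) : ContinuousOn (fun t => diam (x t)) s := by
  simp only [diam_eq_sup']
  exact ContinuousOn.finset_sup'_apply _ fun i _ =>
    ContinuousOn.finset_sup'_apply _ fun j _ => (hx i).sub (hx j)

end Diam

section Phi

lemma phiCS_neg (β y : ℝ) : PhiCS β (-y) = -PhiCS β y := by
  simp only [PhiCS, Real.sign_neg, abs_neg]
  ring

lemma phiCS_of_pos {β y : ℝ} (hy : 0 < y) : PhiCS β y = (1 - y ^ (1 - β)) / (β - 1) := by
  rw [PhiCS, Real.sign_of_pos hy, abs_of_pos hy, one_mul]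

lemma phiCS_monotoneOn (β : ℝ) : MonotoneOn (PhiCS β) (Ioi 0) := by
  intro a (ha : 0 < a) b (hb : 0 < b) hab
  rw [phiCS_of_pos ha, phiCS_of_pos hb]
  rcases le_total β 1 with hβ | hβ
  · rw [← neg_div_neg_eq, ← neg_div_neg_eq (1 - b ^ _)]
    have := Real.rpow_le_rpow ha.le hab (by linarith : 0 ≤ 1 - β)
    gcongr; linarith
  · have := Real.rpow_le_rpow_of_nonpos ha hab (by linarith : 1 - β ≤ 0)
    gcongr

/-- The right-hand side is `Φ⁻¹(C)`, the unique positive solution of `Φ(D) = C`. -/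
lemma phiCS_lt_of_lt_rpow {β C D : ℝ} (hβ : 1 < β) (hC : 0 < 1 - C * (β - 1)) (hD : 0 < D)
    (h : D < (1 - C * (β - 1)) ^ (-(1 / (β - 1)))) : PhiCS β D < C := by
  have hβ1 : 0 < β - 1 := by linarith
  have hpow : 1 - C * (β - 1) < D ^ (1 - β) := by
    have := Real.rpow_lt_rpow_of_neg hD h (by linarith : 1 - β < 0)
    rwa [← Real.rpow_mul hC.le, show -(1 / (β - 1)) * (1 - β) = 1 by field_simp; ring,
      Real.rpow_one] at this
  rw [phiCS_of_pos hD, div_lt_iff₀ hβ1]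
  linarith

end Phi

section Velocity

open Finset

variable {N : ℕ} {β κ : ℝ}

noncomputable def csVelocity (N : ℕ) (β κ : ℝ) (ν y : Fin N → ℝ) (i : Fin N) : ℝ :=
  ν i + (κ / (N : ℝ)) * ∑ k ∈ univ.erase i, PhiCS β (y k - y i)

lemma sum_phiCS_sub_le {y : Fin N → ℝ} (hy : Pairwise fun k l => y k ≠ y l) {j : Fin N}
    (hj : ∀ k, y j ≤ y k) {c : ℝ} (hc : ∀ k, y k - y j ≤ c) :
    ∑ k ∈ univ.erase j, PhiCS β (y k - y j) ≤ (N - 1) * PhiCS β c := by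
  have hbound : ∀ k ∈ univ.erase j, PhiCS β (y k - y j) ≤ PhiCS β c := fun k hk => by
    have hpos : 0 < y k - y j := sub_pos.2 <| (hj k).lt_of_ne (hy (ne_of_mem_erase hk)).symm
    exact phiCS_monotoneOn β hpos (hpos.trans_le (hc k)) (hc k)
  have hcard : (#(univ.erase j) : ℝ) = N - 1 := by
    rw [card_erase_of_mem (mem_univ j), card_univ, Fintype.card_fin, Nat.cast_pred j.pos]
  calc _ ≤ #(univ.erase j) • PhiCS β c := sum_le_card_nsmul _ _ _ hbound
    _ = _ := by rw [nsmul_eq_mul, hcard]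

lemma neg_sum_phiCS_sub_le {y : Fin N → ℝ} (hy : Pairwise fun k l => y k ≠ y l) {i : Fin N}
    (hi : ∀ k, y k ≤ y i) {c : ℝ} (hc : ∀ k, y i - y k ≤ c) :
    -∑ k ∈ univ.erase i, PhiCS β (y k - y i) ≤ (N - 1) * PhiCS β c := by
  have := sum_phiCS_sub_le (β := β) (y := -y) (c := c) (fun k l hkl => by simpa using hy hkl)
    (fun k => neg_le_neg (hi k)) fun k => by simpa [neg_add_eq_sub] using hc k
  rw [← sum_neg_distrib]
  convert this using 3 with k
  rw [← phiCS_neg, Pi.neg_apply, Pi.neg_apply, neg_sub_neg, neg_sub]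

lemma csVelocity_sub_pos (hN : 2 ≤ N) (hκ : 0 < κ) {ν y : Fin N → ℝ}
    (hy : Pairwise fun k l => y k ≠ y l) {i j : Fin N} (hi : ∀ k, y k ≤ y i)
    (hj : ∀ k, y j ≤ y k) (hΦ : PhiCS β (y i - y j) < -(N * diam ν / (2 * κ))) :
    0 < csVelocity N β κ ν y i - csVelocity N β κ ν y j := by
  have hN' : (2 : ℝ) ≤ N := by exact_mod_cast hN
  have : NeZero N := ⟨by omega⟩
  set Φ := PhiCS β (y i - y j)
  have hsum_j := sum_phiCS_sub_le (β := β) (c := y i - y j) hy hj fun k => by linarith [hi k]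
  have hsum_i := neg_sum_phiCS_sub_le (β := β) (c := y i - y j) hy hi fun k => by linarith [hj k]
  have hν : -diam ν ≤ ν i - ν j := by linarith [le_diam ν j i]
  have hdrift : diam ν < κ / N * (2 * (N - 1) * -Φ) := by
    have hΦ' : N * diam ν / (2 * κ) < -Φ := lt_neg.1 hΦ
    have hN1 : (0 : ℝ) < N - 1 := by linarith
    calc diam ν ≤ (N - 1) * diam ν := by nlinarith [diam_nonneg ν]
      _ = κ / N * (2 * (N - 1) * (N * diam ν / (2 * κ))) := by field_simp
      _ < κ / N * (2 * (N - 1) * -Φ) := by gcongr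
  have hgap : κ / N * (2 * (N - 1) * -Φ) ≤
      κ / N * (∑ k ∈ univ.erase i, PhiCS β (y k - y i) -
        ∑ k ∈ univ.erase j, PhiCS β (y k - y j)) := by
    gcongr; linarith
  simp only [csVelocity]
  linarith

end Velocity

lemma HasDerivWithinAt.eventually_gt_of_pos {f : ℝ → ℝ} {f' a : ℝ}
    (hf : HasDerivWithinAt f f' (Ici a) a) (hf' : 0 < f') : ∀ᶠ t in 𝓝[>] a, f a < f t := by
  have hslope := (hasDerivWithinAt_iff_tendsto_slope' (lt_irrefl a)).1 hf.Ioi_of_Ici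
  filter_upwards [hslope.eventually (eventually_gt_nhds hf'), self_mem_nhdsWithin] with t ht hat
  exact (slope_pos_iff_of_le (le_of_lt hat)).1 ht

lemma exists_last_crossing {f : ℝ → ℝ} {a b c : ℝ} (hab : a ≤ b) (hf : ContinuousOn f (Icc a b))
    (ha : c ≤ f a) (hb : f b < c) : ∃ s ∈ Ico a b, f s = c ∧ ∀ t ∈ Ioc s b, f t < c := by
  set S := Icc a b ∩ f ⁻¹' Ici c
  have hS : IsClosed S := hf.preimage_isClosed_of_isClosed isClosed_Icc isClosed_Ici
  have hSa : a ∈ S := ⟨⟨le_rfl, hab⟩, ha⟩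
  have hSbdd : BddAbove S := ⟨b, fun t ht => ht.1.2⟩
  obtain ⟨⟨has, hsb⟩, hcs⟩ : sSup S ∈ S := hS.csSup_mem ⟨a, hSa⟩ hSbdd
  have hbelow : ∀ t ∈ Ioc (sSup S) b, f t < c := fun t ht => not_le.1 fun hct =>
    ht.1.not_ge <| le_csSup hSbdd ⟨⟨has.trans ht.1.le, ht.2⟩, hct⟩
  have hsb' : sSup S < b := hsb.lt_of_ne fun h => hb.not_ge (h ▸ hcs)
  have hle : f (sSup S) ≤ c := by
    have hlim : Tendsto f (𝓝[>] sSup S) (𝓝 (f (sSup S))) := by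
      rw [← nhdsWithin_Ioo_eq_nhdsGT hsb']
      exact (hf _ ⟨has, hsb⟩).mono fun t ht => ⟨has.trans ht.1.le, ht.2.le⟩
    refine le_of_tendsto hlim ?_
    filter_upwards [Ioo_mem_nhdsGT hsb'] with t ht using (hbelow t ⟨ht.1, ht.2.le⟩).le
  exact ⟨sSup S, ⟨has, hsb'⟩, hle.antisymm hcs, hbelow⟩

namespace IsCFSol

variable {N : ℕ} {β κ : ℝ} {ν : Fin N → ℝ} {x : ℝ → Fin N → ℝ}

lemma continuousOn (hx : IsCFSol N β κ ν x) (i : Fin N) :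
    ContinuousOn (fun t => x t i) (Ici 0) :=
  fun t ht => (hx.2.2 i t ht).continuousWithinAt

lemma eventually_diam_gt (hN : 2 ≤ N) (hκ : 0 < κ) (hx : IsCFSol N β κ ν x) {s : ℝ}
    (hs : 0 ≤ s) (hΦ : PhiCS β (diam (x s)) < -(N * diam ν / (2 * κ))) :
    ∀ᶠ t in 𝓝[>] s, diam (x s) < diam (x t) := by
  have : NeZero N := ⟨by omega⟩
  obtain ⟨i, hi⟩ := Finite.exists_max (x s)
  obtain ⟨j, hj⟩ := Finite.exists_min (x s)
  rw [diam_eq_sub hi hj] at hΦ ⊢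
  have hgap := csVelocity_sub_pos hN hκ (fun k l hkl => hx.1 s hs k l hkl) hi hj hΦ
  have hderiv : HasDerivWithinAt (fun t => x t i - x t j)
      (csVelocity N β κ ν (x s) i - csVelocity N β κ ν (x s) j) (Ici s) s :=
    ((hx.2.2 i s hs).sub (hx.2.2 j s hs)).mono (Ici_subset_Ici.2 hs)
  filter_upwards [hderiv.eventually_gt_of_pos hgap] with t ht
  exact ht.trans_le (le_diam _ i j)

end IsCFSol

theorem stmt9_general (N : ℕ) (hN : 2 ≤ N) (β κ : ℝ) (hβ : 1 < β) (hκ : 0 < κ)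
    (ν : Fin N → ℝ)
    (x : ℝ → Fin N → ℝ) (hx : IsCFSol N β κ ν x) :
    ∀ t ≥ (0:ℝ),
      min 1 (min (diam (x 0))
        ((1 + (N:ℝ) * (diam ν) * (β - 1) / (2 * κ)) ^ (-(1 / (β - 1)))))
      ≤ diam (x t) := by
  have : NeZero N := ⟨by omega⟩
  intro t₀ ht₀
  by_contra! hlt
  obtain ⟨c, hct₀, hcL⟩ := exists_between hlt
  have hc_init : c ≤ diam (x 0) := hcL.le.trans ((min_le_right _ _).trans (min_le_left _ _))
  have hΦ : PhiCS β c < -(N * diam ν / (2 * κ)) := by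
    have hthreshold : 1 + (N:ℝ) * diam ν * (β - 1) / (2 * κ) =
        1 - -(N * diam ν / (2 * κ)) * (β - 1) := by ring
    refine phiCS_lt_of_lt_rpow hβ ?_ ((diam_nonneg _).trans_lt hct₀) ?_
    · rw [← hthreshold]
      have := diam_nonneg ν
      have : 0 < β - 1 := by linarith
      positivity
    · rw [← hthreshold]
      exact hcL.trans_le ((min_le_right _ _).trans (min_le_right _ _))
  obtain ⟨s, ⟨hs₀, hst₀⟩, hsc, hbelow⟩ := exists_last_crossing ht₀
    ((continuousOn_diam hx.continuousOn).mono Icc_subset_Ici_self) hc_init hct₀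
  obtain ⟨t, hgrow, hts⟩ :=
    ((hx.eventually_diam_gt hN hκ hs₀ (hsc ▸ hΦ)).and (Ioo_mem_nhdsGT hst₀)).exists
  exact (hbelow t ⟨hts.1, hts.2.le⟩).not_gt (hsc ▸ hgrow)

/-- Uniform-in-time lower bound for the position diameter when `β > 1`:
`D_x(t) ≥ C_L = min{1, D_x(0), Φ⁻¹(−N·D_ν/(2κ))}`. -/
theorem stmt9 (N : ℕ) (hN : 2 ≤ N) (β κ : ℝ) (hβ : 1 < β) (hκ : 0 < κ)
    (ν : Fin N → ℝ) (hν : ∑ i, ν i = 0)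
    (x : ℝ → Fin N → ℝ) (hx : IsCFSol N β κ ν x) :
    ∀ t ≥ (0:ℝ),
      min 1 (min (diam (x 0))
        ((1 + (N:ℝ) * (diam ν) * (β - 1) / (2 * κ)) ^ (-(1 / (β - 1)))))
      ≤ diam (x t) :=
  stmt9_general N hN β κ hβ hκ ν x hx
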